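/- Let J be a full-rank m×n real matrix with 2 ≤ m ≤ n. Define the local skewness of J as SK(J) = max over k of ‖j_k‖ / ‖j_k⊥‖, where j_k is the k-th row and j_k⊥ its component orthogonal to the span of the remaining rows. Then SK(J) = max over k of ‖j_k‖ · (∏_{i=1}^{m−1} σ_{k,i}) / (∏_{i=1}^m σ_i), where σ_i are the singular values of J and σ_{k,i} the singular values of the submatrix J_k obtained by deleting row k. -/

import Mathlib

open Matrix MeasureTheory Pointwise

/-- Singular values of a real matrix `J`: square roots of the eigenvalues of `J * Jᵀ`. -/
noncomputable def singularValues {p q : Type*} [Fintype p] [Fintype q] [DecidableEq p]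
    (J : Matrix p q ℝ) : p → ℝ :=
  fun i => Real.sqrt ((Matrix.isHermitian_mul_conjTranspose_self J).eigenvalues i)

/-- Euclidean norm of a vector in `ℝ^n` (written as a function). -/
noncomputable def euclNorm {q : Type*} [Fintype q] (v : q → ℝ) : ℝ :=
  Real.sqrt (∑ i, v i ^ 2)

/-- View a plain vector as an element of Euclidean space. -/
noncomputable def toE {n : ℕ} (v : Fin n → ℝ) : EuclideanSpace ℝ (Fin n) :=
  (WithLp.equiv 2 (Fin n → ℝ)).symm v

/-- The component of the `k`-th row of `J` orthogonal to the span of the other rows. -/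
noncomputable def perpRow {m n : ℕ} (J : Matrix (Fin m) (Fin n) ℝ) (k : Fin m) :
    EuclideanSpace ℝ (Fin n) :=
  toE (J k) -
    (Submodule.orthogonalProjection (Submodule.span ℝ {x | ∃ i, i ≠ k ∧ x = toE (J i)}) (toE (J k)) :
      EuclideanSpace ℝ (Fin n))

/-- The Moore–Penrose pseudo-inverse of a full row-rank matrix. -/
noncomputable def pinv {m n : ℕ} (J : Matrix (Fin m) (Fin n) ℝ) : Matrix (Fin n) (Fin m) ℝ :=
  Jᵀ * (J * Jᵀ)⁻¹

/-- The submatrix of `J` obtained by deleting row `k`. -/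
def delRow {m n : ℕ} (J : Matrix (Fin m) (Fin n) ℝ) (k : Fin m) :
    Matrix {i : Fin m // i ≠ k} (Fin n) ℝ :=
  J.submatrix (fun i => (i : Fin m)) id

/-
The squared volume `det (J Jᵀ)` of the parallelepiped spanned by the rows factors as
"base times height": `det (J Jᵀ) = ‖j_k⊥‖² * det (J_k J_kᵀ)`. Indeed, replacing `j_k` by `j_k⊥`
subtracts a combination of the other rows, a row operation of determinant one, and afterwards
the Gram matrix is block diagonal. Since `∏ σ_i = √(det (J Jᵀ))`, and likewise for `J_k`, the two
suprema agree term by term.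
-/

open InnerProductSpace

section Gram

variable {ι E : Type*} [Fintype ι] [NormedAddCommGroup E] [InnerProductSpace ℝ E]

theorem gram_sum_smul {κ : Type*} (A : Matrix κ ι ℝ) (v : ι → E) :
    gram ℝ (fun i => ∑ j, A i j • v j) = A * gram ℝ v * Aᵀ := by
  ext i j
  simp only [gram_apply, sum_inner, inner_sum, real_inner_smul_left, real_inner_smul_right,
    mul_apply, transpose_apply, Finset.sum_mul]
  exact Finset.sum_congr rfl fun _ _ => Finset.sum_congr rfl fun _ _ => by ring

variable [DecidableEq ι]

theorem det_gram_sub_single_sum_smul (v : ι → E) (k : ι) (c : ι → ℝ) (hc : c k = 0) :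
    (gram ℝ (v - Pi.single k (∑ j, c j • v j))).det = (gram ℝ v).det := by
  -- the transvection `1 - e_k cᵀ`, of determinant `1 - c k = 1`
  let T : Matrix ι ι ℝ := 1 + replicateCol Unit (Pi.single k (1 : ℝ)) * replicateRow Unit (-c)
  have hT : T.det = 1 := by
    simp [T, det_one_add_replicateCol_mul_replicateRow, hc]
  have hv : v - Pi.single k (∑ j, c j • v j) = fun i => ∑ j, T i j • v j := by
    ext i
    by_cases hi : i = k <;>
      simp [T, hi, add_smul, Finset.sum_add_distrib, one_apply, mul_apply, sub_eq_add_neg]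
  rw [hv, gram_sum_smul, det_mul, det_mul, det_transpose, hT, one_mul, mul_one]

theorem det_gram_of_inner_eq_zero (v : ι → E) (k : ι) (h : ∀ i ≠ k, ⟪v i, v k⟫_ℝ = 0) :
    (gram ℝ v).det = ‖v k‖ ^ 2 * (gram ℝ fun i : {i // i ≠ k} => v i).det := by
  have : Subsingleton {i // ¬i ≠ k} :=
    ⟨fun a b => Subtype.ext ((not_not.1 a.2).trans (not_not.1 b.2).symm)⟩
  rw [twoBlockTriangular_det' _ (· ≠ k) fun i hi j hj => by simpa [not_not.1 hj] using h i hi,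
    det_eq_elem_of_subsingleton (toSquareBlockProp _ fun i => ¬i ≠ k) ⟨k, not_not.2 rfl⟩,
    mul_comm]
  exact congrArg (· * _) (real_inner_self_eq_norm_sq _)

theorem det_gram_eq_norm_sq_mul_of_mem_span (v : ι → E) (k : ι) {p : E}
    (hp : p ∈ Submodule.span ℝ (v '' {i | i ≠ k})) (horth : ∀ i ≠ k, ⟪v i, v k - p⟫_ℝ = 0) :
    (gram ℝ v).det = ‖v k - p‖ ^ 2 * (gram ℝ fun i : {i // i ≠ k} => v i).det := by
  obtain ⟨c, hc, rfl⟩ := (Finsupp.mem_span_image_iff_linearCombination ℝ).1 hp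
  have hck : c k = 0 := (Finsupp.mem_supported' _ _).1 hc k (by simp)
  rw [Finsupp.linearCombination_apply, Finsupp.sum_fintype _ _ (by simp)] at horth ⊢
  rw [← det_gram_sub_single_sum_smul v k c hck, det_gram_of_inner_eq_zero _ k]
  · have hsingle : ∀ i : {i // i ≠ k}, (Pi.single k (∑ j, c j • v j) : ι → E) i = 0 :=
      fun i => Pi.single_eq_of_ne i.2 _
    simp [hsingle]
  · intro i hi
    simpa [hi] using horth i hi

end Gram

theorem linearIndependent_row_of_rank_eq {R m n : Type*} [Field R] [Fintype m] [Fintype n]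
    {A : Matrix m n R} (h : A.rank = Fintype.card m) : LinearIndependent R A.row :=
  linearIndependent_iff_card_eq_finrank_span.2 <| by
    rw [Set.finrank, ← rank_eq_finrank_span_row, h]

theorem prod_singularValues {p q : Type*} [Fintype p] [Fintype q] [DecidableEq p]
    (A : Matrix p q ℝ) : ∏ i, singularValues A i = √(A * Aᵀ).det := by
  have hA := isHermitian_mul_conjTranspose_self A
  rw [← conjTranspose_eq_transpose_of_trivial, hA.det_eq_prod_eigenvalues]
  exact (Real.sqrt_prod _ fun i _ =>
    (posSemidef_self_mul_conjTranspose A).eigenvalues_nonneg i).symm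

theorem mul_transpose_eq_gram {p : Type*} {n : ℕ} (A : Matrix p (Fin n) ℝ) :
    A * Aᵀ = gram ℝ fun i => toE (A i) := by
  ext i j
  simp [mul_apply, toE, PiLp.inner_apply, mul_comm]

theorem det_mul_transpose_eq_norm_sq_perpRow_mul {m n : ℕ} (J : Matrix (Fin m) (Fin n) ℝ)
    (k : Fin m) :
    (J * Jᵀ).det = ‖perpRow J k‖ ^ 2 * (delRow J k * (delRow J k)ᵀ).det := by
  have hK : {x | ∃ i, i ≠ k ∧ x = toE (J i)} = (fun i => toE (J i)) '' {i | i ≠ k} := by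
    ext x
    constructor <;> rintro ⟨i, hi, rfl⟩ <;> exact ⟨i, hi, rfl⟩
  set K := Submodule.span ℝ {x | ∃ i, i ≠ k ∧ x = toE (J i)}
  rw [mul_transpose_eq_gram, mul_transpose_eq_gram]
  refine det_gram_eq_norm_sq_mul_of_mem_span _ k (p := K.starProjection (toE (J k)))
    (by rw [← hK]; exact K.starProjection_apply_mem _) fun i hi => ?_
  exact (K.mem_orthogonal _).1 (K.sub_starProjection_mem_orthogonal _) _
    (Submodule.subset_span ⟨i, hi, rfl⟩)

theorem stmt9_general {m n : ℕ} (J : Matrix (Fin m) (Fin n) ℝ)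
    (hrank : J.rank = m) :
    (⨆ k, ‖toE (J k)‖ / ‖perpRow J k‖) =
      ⨆ k, ‖toE (J k)‖ * (∏ i, singularValues (delRow J k) i) / ∏ i, singularValues J i := by
  refine iSup_congr fun k => ?_
  have hrows : LinearIndependent ℝ fun i => toE (J i) :=
    (linearIndependent_row_of_rank_eq (A := J) (by rw [hrank, Fintype.card_fin])).map'
      (WithLp.linearEquiv 2 ℝ (Fin n → ℝ)).symm.toLinearMap (LinearEquiv.ker _)
  have hJk : 0 < (delRow J k * (delRow J k)ᵀ).det := by
    rw [mul_transpose_eq_gram]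
    exact (posDef_gram_of_linearIndependent (hrows.comp _ Subtype.val_injective)).det_pos
  rw [prod_singularValues, prod_singularValues, det_mul_transpose_eq_norm_sq_perpRow_mul J k,
    Real.sqrt_mul (sq_nonneg _), Real.sqrt_sq (norm_nonneg _)]
  exact (mul_div_mul_right _ _ (Real.sqrt_pos.2 hJk).ne').symm

theorem stmt9 {m n : ℕ} (hm : 2 ≤ m) (hmn : m ≤ n) (J : Matrix (Fin m) (Fin n) ℝ)
    (hrank : J.rank = m) :
    (⨆ k, ‖toE (J k)‖ / ‖perpRow J k‖) =
      ⨆ k, ‖toE (J k)‖ * (∏ i, singularValues (delRow J k) i) / ∏ i, singularValues J i :=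
  stmt9_general J hrank
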